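/- arXiv:2604.24523 — 9 statements merged into one kernel-verified Lean document; each statement's English description precedes it below -/
import Mathlib

section
/- Let k, ℓ, q be positive integers and define D(k,ℓ,q) = { M ∈ ℕ_{>0} : ℓ·gcd(k,M) divides qM }. Then D(k,ℓ,q) is closed under greatest common divisors: if M₁, M₂ ∈ D(k,ℓ,q), then gcd(M₁,M₂) ∈ D(k,ℓ,q). -/
/-- The set `D(k,ℓ,q) = { M > 0 : ℓ·gcd(k,M) ∣ q·M }` is closed under greatest
common divisors. -/
theorem D_closed_under_gcd (k ℓ q : ℕ) (hk : 0 < k) (hl : 0 < ℓ) (hq : 0 < q)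
    (M₁ M₂ : ℕ) (hM₁ : 0 < M₁) (hM₂ : 0 < M₂)
    (h₁ : ℓ * Nat.gcd k M₁ ∣ q * M₁) (h₂ : ℓ * Nat.gcd k M₂ ∣ q * M₂) :
    ℓ * Nat.gcd k (Nat.gcd M₁ M₂) ∣ q * Nat.gcd M₁ M₂ := by
  have hd1 : ℓ * Nat.gcd k (Nat.gcd M₁ M₂) ∣ q * M₁ :=
    dvd_trans (mul_dvd_mul_left ℓ (Nat.gcd_dvd_gcd_of_dvd_right k (Nat.gcd_dvd_left M₁ M₂))) h₁
  have hd2 : ℓ * Nat.gcd k (Nat.gcd M₁ M₂) ∣ q * M₂ :=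
    dvd_trans (mul_dvd_mul_left ℓ (Nat.gcd_dvd_gcd_of_dvd_right k (Nat.gcd_dvd_right M₁ M₂))) h₂
  have := Nat.dvd_gcd hd1 hd2
  rwa [Nat.gcd_mul_left] at this
end

section
/- Let k, ℓ, q be positive integers, set ℓ₁ = ℓ / gcd(ℓ,q), and define D(k,ℓ,q) = { M ∈ ℕ_{>0} : ℓ·gcd(k,M) divides qM }. Then D(k,ℓ,q) is exactly the set of positive multiples of the number 𝔪(k,ℓ,q) := ℓ₁ · max_{n ∈ ℕ} gcd(k, ℓ₁ⁿ); equivalently 𝔪(k,ℓ,q) = ℓ₁ · gcd(k, ℓ₁^u) for any sufficiently large u. -/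
/-!
Write `ℓ = d ℓ₁` and `q = d q₁` with `d = gcd(ℓ, q)`, so that `ℓ₁` and `q₁` are coprime.
Since `gcd(k, M) ∣ M`, the condition `ℓ · gcd(k, M) ∣ q M` reduces to
`ℓ₁ · gcd(k, M) ∣ M`. The divisors `g_u = gcd(k, ℓ₁^u)` of `k` increase until they
stabilise, and once `g_{u+1} = g_u` the cofactor `k / g_u` is coprime to `ℓ₁`: thus
`g = g_u` is the `ℓ₁`-part of `k`. Now `ℓ₁ · gcd(k, M) ∣ M` forces `k / gcd(k, M)` to be
coprime to `ℓ₁`, i.e. `g ∣ gcd(k, M)`; conversely, if `M = ℓ₁ g N` then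
`gcd(k, M) = gcd(k, g N)` divides `g N`.
-/

namespace Nat

theorem gcd_dvd_of_coprime_div {k c n : ℕ} (hc : c ∣ k) (h : Coprime (k / c) n) :
    gcd k n ∣ c :=
  calc gcd k n = gcd n (c * (k / c)) := by rw [Nat.mul_div_cancel' hc, gcd_comm]
    _ ∣ gcd n c * gcd n (k / c) := gcd_mul_right_dvd_mul_gcd n c (k / c)
    _ = gcd n c := by rw [h.symm.gcd_eq_one, mul_one]
    _ ∣ c := gcd_dvd_right n c

theorem coprime_div_gcd_of_gcd_mul_eq {k m l : ℕ} (hk : 0 < k)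
    (h : gcd k (m * l) = gcd k m) : Coprime (k / gcd k m) l := by
  set g := gcd k m
  have hg : 0 < g := gcd_pos_of_pos_left m hk
  have hdk : g * gcd (k / g) l ∣ k :=
    (mul_dvd_mul_left g (gcd_dvd_left _ l)).trans
      (dvd_of_eq (Nat.mul_div_cancel' (gcd_dvd_left k m)))
  have hdml : g * gcd (k / g) l ∣ m * l := mul_dvd_mul (gcd_dvd_right k m) (gcd_dvd_right _ _)
  have hdg : g * gcd (k / g) l ∣ g * 1 :=
    (dvd_gcd hdk hdml).trans (dvd_of_eq (h.trans (mul_one g).symm))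
  exact eq_one_of_dvd_one ((Nat.mul_dvd_mul_iff_left hg).mp hdg)

theorem exists_gcd_pow_succ_eq {k : ℕ} (hk : 0 < k) (l : ℕ) :
    ∃ u, gcd k (l ^ (u + 1)) = gcd k (l ^ u) := by
  by_contra! hne
  have hmono : StrictMono fun u => gcd k (l ^ u) := by
    refine strictMono_nat_of_lt_succ fun u => lt_of_le_of_ne ?_ (hne u).symm
    exact le_of_dvd (gcd_pos_of_pos_left _ hk)
      (gcd_dvd_gcd_of_dvd_right k (pow_dvd_pow l u.le_succ))
  have hbig : k + 1 ≤ gcd k (l ^ (k + 1)) := hmono.le_apply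
  have hsmall : gcd k (l ^ (k + 1)) ≤ k := le_of_dvd hk (gcd_dvd_left _ _)
  omega

theorem exists_coprime_div_gcd_pow {k : ℕ} (hk : 0 < k) (l : ℕ) :
    ∃ u, Coprime (k / gcd k (l ^ u)) l := by
  obtain ⟨u, hu⟩ := exists_gcd_pow_succ_eq hk l
  exact ⟨u, coprime_div_gcd_of_gcd_mul_eq hk (pow_succ l u ▸ hu)⟩

theorem gcd_pow_eq_of_coprime_div {k l u₀ u : ℕ} (h : Coprime (k / gcd k (l ^ u₀)) l)
    (hu : u₀ ≤ u) : gcd k (l ^ u) = gcd k (l ^ u₀) :=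
  dvd_antisymm (gcd_dvd_of_coprime_div (gcd_dvd_left _ _) (h.pow_right u))
    (gcd_dvd_gcd_of_dvd_right k (pow_dvd_pow l hu))

theorem gcd_mul_left_eq_of_coprime_div {k g l x : ℕ} (hgk : g ∣ k) (hgx : g ∣ x)
    (h : Coprime (k / g) l) : gcd k (l * x) = gcd k x := by
  obtain ⟨k', rfl⟩ := hgk
  obtain ⟨N, rfl⟩ := hgx
  rcases g.eq_zero_or_pos with rfl | hg
  · simp
  rw [Nat.mul_div_cancel_left k' hg] at h
  rw [mul_left_comm, gcd_mul_left, gcd_mul_left, Coprime.gcd_mul_left_cancel_right N h.symm]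

theorem mul_dvd_mul_iff_of_coprime {L Q c M : ℕ} (hLQ : Coprime L Q) (hc : c ∣ M) :
    L * c ∣ Q * M ↔ L * c ∣ M := by
  obtain ⟨M', rfl⟩ := hc
  rcases c.eq_zero_or_pos with rfl | hc
  · simp
  rw [mul_left_comm, mul_comm L, Nat.mul_dvd_mul_iff_left hc, Nat.mul_dvd_mul_iff_left hc,
    hLQ.dvd_mul_left]

theorem mul_dvd_mul_iff_div_gcd {ℓ q c M : ℕ} (hd : 0 < gcd ℓ q) (hc : c ∣ M) :
    ℓ * c ∣ q * M ↔ ℓ / gcd ℓ q * c ∣ M := by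
  set d := gcd ℓ q
  calc ℓ * c ∣ q * M ↔ d * (ℓ / d * c) ∣ d * (q / d * M) := by
        rw [← mul_assoc, ← mul_assoc, Nat.mul_div_cancel' (gcd_dvd_left ℓ q),
          Nat.mul_div_cancel' (gcd_dvd_right ℓ q)]
    _ ↔ ℓ / d * c ∣ q / d * M := Nat.mul_dvd_mul_iff_left hd
    _ ↔ ℓ / d * c ∣ M := mul_dvd_mul_iff_of_coprime (coprime_div_gcd_div_gcd hd) hc

theorem mul_gcd_dvd_iff_of_coprime_div {k l u M : ℕ} (hk : 0 < k)
    (h : Coprime (k / gcd k (l ^ u)) l) :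
    l * gcd k M ∣ M ↔ l * gcd k (l ^ u) ∣ M := by
  constructor
  · intro hM
    set c := gcd k M
    have hck : c ∣ k := gcd_dvd_left k M
    have hcl : gcd k (c * l) = gcd k c := by
      rw [gcd_eq_right hck, mul_comm]
      exact dvd_antisymm (gcd_dvd_gcd_of_dvd_right k hM) (dvd_gcd hck (dvd_mul_left c l))
    have hcop : Coprime (k / c) l := gcd_eq_right hck ▸ coprime_div_gcd_of_gcd_mul_eq hk hcl
    exact (mul_dvd_mul_left l (gcd_dvd_of_coprime_div hck (hcop.pow_right u))).trans hM
  · rintro ⟨N, rfl⟩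
    rw [mul_assoc, gcd_mul_left_eq_of_coprime_div (gcd_dvd_left _ _) (dvd_mul_right _ N) h]
    exact mul_dvd_mul_left l (gcd_dvd_right _ _)

end Nat

theorem D_eq_multiples_of_frakm_general (k ℓ q : ℕ) (hk : 0 < k) (hl : 0 < ℓ) :
    ∃ u₀ : ℕ,
      (∀ u, u₀ ≤ u →
        Nat.gcd k ((ℓ / Nat.gcd ℓ q) ^ u) = Nat.gcd k ((ℓ / Nat.gcd ℓ q) ^ u₀)) ∧
      ∀ M : ℕ, 0 < M →
        ((ℓ * Nat.gcd k M ∣ q * M) ↔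
          (ℓ / Nat.gcd ℓ q) * Nat.gcd k ((ℓ / Nat.gcd ℓ q) ^ u₀) ∣ M) := by
  obtain ⟨u₀, hu₀⟩ := Nat.exists_coprime_div_gcd_pow hk (ℓ / Nat.gcd ℓ q)
  refine ⟨u₀, fun u hu => Nat.gcd_pow_eq_of_coprime_div hu₀ hu, fun M _ => ?_⟩
  rw [Nat.mul_dvd_mul_iff_div_gcd (Nat.gcd_pos_of_pos_left q hl) (Nat.gcd_dvd_right k M),
    Nat.mul_gcd_dvd_iff_of_coprime_div hk hu₀]

/-- Setting `ℓ₁ = ℓ / gcd(ℓ,q)`, the set `D(k,ℓ,q) = { M > 0 : ℓ·gcd(k,M) ∣ q·M }` is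
exactly the set of positive multiples of `𝔪(k,ℓ,q) = ℓ₁ · gcd(k, ℓ₁^u)` for any
sufficiently large `u` (the value `gcd(k, ℓ₁^u)` stabilizes, achieving
`max_{n} gcd(k, ℓ₁^n)`). -/
theorem D_eq_multiples_of_frakm (k ℓ q : ℕ) (hk : 0 < k) (hl : 0 < ℓ) (hq : 0 < q) :
    ∃ u₀ : ℕ,
      (∀ u, u₀ ≤ u →
        Nat.gcd k ((ℓ / Nat.gcd ℓ q) ^ u) = Nat.gcd k ((ℓ / Nat.gcd ℓ q) ^ u₀)) ∧
      ∀ M : ℕ, 0 < M →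
        ((ℓ * Nat.gcd k M ∣ q * M) ↔
          (ℓ / Nat.gcd ℓ q) * Nat.gcd k ((ℓ / Nat.gcd ℓ q) ^ u₀) ∣ M) :=
  D_eq_multiples_of_frakm_general k ℓ q hk hl
end

section
/- Let 𝔪(k,ℓ,q) = ℓ₁ · gcd(k, ℓ₁^u) for u sufficiently large, where ℓ₁ = ℓ / gcd(ℓ,q). If ℓ does not divide 𝔫(n,m,k) := (m+k) · n / gcd(n,k), then for every divisor e of k, lcm(e, 𝔪(k,ℓ,m+k)) does not divide n. -/
/-!
Write `ℓ₁ = ℓ / gcd(ℓ, m+k)` and `g = gcd(k, ℓ₁^u)`. Because `gcd(k, ℓ₁^v)` has stabilised at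
`v = u`, one has `gcd(k, ℓ₁ g) = gcd(k, ℓ₁^(u+1)) = g`. So if `ℓ₁ g ∣ n`, say `n = ℓ₁ g t`, then
`gcd(n, k) ∣ g t`, whence `ℓ₁ · gcd(n, k) ∣ n`, i.e. `ℓ₁ ∣ n / gcd(n, k)`, and multiplying by
`gcd(ℓ, m+k) ∣ m+k` gives `ℓ ∣ 𝔫(n,m,k)`. Since `ℓ₁ g ∣ lcm(e, ℓ₁ g)`, this is the contrapositive.
-/

namespace Nat

theorem gcd_mul_gcd_pow (k a u : ℕ) : gcd k (a * gcd k (a ^ u)) = gcd k (a ^ (u + 1)) := by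
  rw [← gcd_mul_left, ← gcd_assoc, gcd_mul_left_right, pow_succ']

theorem mul_gcd_dvd_of_gcd_mul_dvd {a d k n : ℕ} (hd : gcd k (a * d) ∣ d) (hn : a * d ∣ n) :
    a * gcd n k ∣ n := by
  obtain ⟨t, rfl⟩ := hn
  have hgcd : gcd (a * d * t) k ∣ d * t := by
    rw [gcd_comm]
    exact (gcd_mul_right_dvd_mul_gcd k (a * d) t).trans (mul_dvd_mul hd (gcd_dvd_right k t))
  calc a * gcd (a * d * t) k ∣ a * (d * t) := mul_dvd_mul_left a hgcd
    _ = a * d * t := (mul_assoc a d t).symm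

theorem dvd_mul_of_div_gcd_dvd {l q b : ℕ} (h : l / gcd l q ∣ b) : l ∣ q * b := by
  rw [← Nat.mul_div_cancel' (gcd_dvd_left l q)]
  exact mul_dvd_mul (gcd_dvd_right l q) h

end Nat

theorem not_lcm_frakm_dvd_general (k ℓ m n u : ℕ)
    (hu : ∀ v, u ≤ v →
      Nat.gcd k ((ℓ / Nat.gcd ℓ (m + k)) ^ v) = Nat.gcd k ((ℓ / Nat.gcd ℓ (m + k)) ^ u))
    (hnd : ¬ ℓ ∣ (m + k) * (n / Nat.gcd n k)) :
    ∀ e : ℕ, e ∣ k →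
      ¬ Nat.lcm e ((ℓ / Nat.gcd ℓ (m + k)) * Nat.gcd k ((ℓ / Nat.gcd ℓ (m + k)) ^ u)) ∣ n := by
  intro e _ hdvd
  set ℓ₁ := ℓ / Nat.gcd ℓ (m + k)
  have hstable : Nat.gcd k (ℓ₁ * Nat.gcd k (ℓ₁ ^ u)) = Nat.gcd k (ℓ₁ ^ u) := by
    rw [Nat.gcd_mul_gcd_pow]
    exact hu (u + 1) u.le_succ
  have hmul : ℓ₁ * Nat.gcd n k ∣ n :=
    Nat.mul_gcd_dvd_of_gcd_mul_dvd hstable.dvd ((Nat.dvd_lcm_right e _).trans hdvd)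
  rw [mul_comm, ← Nat.dvd_div_iff_mul_dvd (Nat.gcd_dvd_left n k)] at hmul
  exact hnd (Nat.dvd_mul_of_div_gcd_dvd hmul)

/-- Let `ℓ₁ = ℓ / gcd(ℓ, m+k)` and `𝔪(k,ℓ,m+k) = ℓ₁ · gcd(k, ℓ₁^u)` for `u` sufficiently
large (i.e. such that `gcd(k, ℓ₁^v)` has stabilized). If `ℓ` does not divide
`𝔫(n,m,k) = (m+k)·n/gcd(n,k)`, then for every divisor `e` of `k`,
`lcm(e, 𝔪(k,ℓ,m+k))` does not divide `n`. -/
theorem not_lcm_frakm_dvd (k ℓ m n u : ℕ)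
    (hk : 0 < k) (hl : 0 < ℓ) (hm : 0 < m) (hn : 0 < n)
    (hu : ∀ v, u ≤ v →
      Nat.gcd k ((ℓ / Nat.gcd ℓ (m + k)) ^ v) = Nat.gcd k ((ℓ / Nat.gcd ℓ (m + k)) ^ u))
    (hnd : ¬ ℓ ∣ (m + k) * (n / Nat.gcd n k)) :
    ∀ e : ℕ, e ∣ k →
      ¬ Nat.lcm e ((ℓ / Nat.gcd ℓ (m + k)) * Nat.gcd k ((ℓ / Nat.gcd ℓ (m + k)) ^ u)) ∣ n :=
  not_lcm_frakm_dvd_general k ℓ m n u hu hnd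
end

section
/- Let a, b, c be positive integers with gcd(a,c) = 1. Then the cyclotomic polynomial Φ_{ab}(τ) divides Φ_a(τ^{bc}) in ℤ[τ]. -/
open Polynomial

/-- If `a, b, c` are positive integers with `gcd(a,c) = 1`, then the cyclotomic polynomial
`Φ_{ab}(τ)` divides `Φ_a(τ^{bc})` in `ℤ[τ]`. -/
theorem cyclotomic_mul_dvd_cyclotomic_comp (a b c : ℕ)
    (ha : 0 < a) (hb : 0 < b) (hc : 0 < c) (h : Nat.Coprime a c) :
    cyclotomic (a * b) ℤ ∣ (cyclotomic a ℤ).comp (X ^ (b * c)) := by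
  have habpos : 0 < a * b := mul_pos ha hb
  obtain ⟨μ, hprim⟩ : ∃ μ : ℂ, IsPrimitiveRoot μ (a * b) :=
    ⟨_, Complex.isPrimitiveRoot_exp _ habpos.ne'⟩
  have hpow : IsPrimitiveRoot (μ ^ (b * c)) a := by
    have h1 : IsPrimitiveRoot (μ ^ b) a := hprim.pow habpos (mul_comm a b)
    have h2 := h1.pow_of_coprime c h.symm
    rwa [← pow_mul] at h2
  have : NeZero ((a : ℤ) : ℂ) := ⟨by exact_mod_cast ha.ne'⟩
  rw [← map_dvd_map (Int.castRingHom ℚ) Int.cast_injective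
    (cyclotomic.monic (a * b) ℤ), Polynomial.map_comp, Polynomial.map_pow, Polynomial.map_X,
    map_cyclotomic, map_cyclotomic, cyclotomic_eq_minpoly_rat hprim habpos]
  refine minpoly.dvd ℚ _ ?_
  rw [aeval_comp, aeval_X_pow, aeval_def, ← eval_map, map_cyclotomic, ← IsRoot.def,
    isRoot_cyclotomic_iff]
  exact hpow
end

section
/- Let h(τ) be a product of cyclotomic polynomials and let n, m, k be positive integers. If Φ_n(τ) divides h(τ), then Φ_{(m+k)·n/gcd(n,k)}(τ) divides h^{(k)}(τ^{m+k}). -/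
open Polynomial

/-! If `τ` is a primitive `(m+k)·n/gcd(n,k)`-th root of unity, then `τ^(m+k)` is a primitive
`n/gcd(n,k)`-th root of unity, and every such root is the `k`-th power of a primitive `n`-th
root `ζ`. Since `Φ_n ∣ h`, `ζ` is a root of `h`, so `ζ^k = τ^(m+k)` is a root of `h^{(k)}`.
Thus `h^{(k)}(τ^{m+k})` vanishes at every primitive root of order `(m+k)·n/gcd(n,k)`, and the
cyclotomic polynomial, being a product of distinct linear factors, divides it. -/

/-- For a polynomial `h(τ) = ∏ (τ - ζⱼ)` (split over `ℂ`), the polynomial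
`h^{(k)}(τ) = ∏ (τ - ζⱼᵏ)` obtained by raising every root to the `k`-th power. -/
noncomputable def powRoots (k : ℕ) (h : Polynomial ℂ) : Polynomial ℂ :=
  (h.roots.map fun z => X - C (z ^ k)).prod

theorem Polynomial.cyclotomic_dvd_of_forall_isPrimitiveRoot_isRoot {K : Type*} [Field K]
    {ζ : K} {N : ℕ} (hζ : IsPrimitiveRoot ζ N) {q : K[X]}
    (hq : ∀ μ, IsPrimitiveRoot μ N → q.IsRoot μ) : cyclotomic N K ∣ q := by
  rw [cyclotomic_eq_prod_X_sub_primitiveRoots hζ]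
  refine Finset.prod_dvd_of_coprime
    (fun a _ b _ hab => pairwise_coprime_X_sub_C Function.injective_id hab) fun μ hμ => ?_
  exact dvd_iff_isRoot.mpr (hq μ (isPrimitiveRoot_of_mem_primitiveRoots hμ))

theorem IsPrimitiveRoot.exists_isPrimitiveRoot_pow_eq {R : Type*} [CommRing R] [IsDomain R]
    {ξ : R} {n : ℕ} [NeZero n] (hξ : IsPrimitiveRoot ξ n) (k : ℕ) {μ : R}
    (hμ : IsPrimitiveRoot μ (n / n.gcd k)) : ∃ ζ, IsPrimitiveRoot ζ n ∧ ζ ^ k = μ := by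
  set d := n / n.gcd k
  have hdn : d ∣ n := Nat.div_dvd_of_dvd (Nat.gcd_dvd_left n k)
  have hnkd : n ∣ k * d := by
    conv_lhs => rw [← Nat.mul_div_cancel' (Nat.gcd_dvd_left n k)]
    exact Nat.mul_dvd_mul_right (Nat.gcd_dvd_right n k) d
  have : NeZero d := ⟨(Nat.div_pos (Nat.gcd_le_left k (NeZero.pos n))
    (Nat.gcd_pos_of_pos_left k (NeZero.pos n))).ne'⟩
  have hξk : IsPrimitiveRoot (ξ ^ k) d := IsPrimitiveRoot.iff_orderOf.mpr <| by
    rw [(hξ.isOfFinOrder (NeZero.ne n)).orderOf_pow, ← hξ.eq_orderOf]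
  obtain ⟨i, -, rfl⟩ := hξk.eq_pow_of_pow_eq_one hμ.pow_eq_one
  have hi : i.Coprime d := (hξk.pow_iff_coprime (NeZero.pos d) i).mp hμ
  obtain ⟨u, hu⟩ := ZMod.unitsMap_surjective hdn (ZMod.unitOfCoprime i hi)
  set a := (u : ZMod n).val
  have hai : a ≡ i [MOD d] := by
    rw [← ZMod.natCast_eq_natCast_iff, ZMod.natCast_val, ← ZMod.unitsMap_val hdn, hu,
      ZMod.coe_unitOfCoprime]
  refine ⟨ξ ^ a, hξ.pow_of_coprime a (ZMod.val_coe_unit_coprime u), ?_⟩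
  rw [← pow_mul, ← pow_mul, mul_comm a]
  exact pow_eq_pow_of_modEq ((hai.mul_left' k).of_dvd hnkd) hξ.pow_eq_one

theorem isRoot_powRoots_pow {h : ℂ[X]} (hh : h ≠ 0) {z : ℂ} (hz : h.IsRoot z) (k : ℕ) :
    (powRoots k h).IsRoot (z ^ k) := by
  rw [powRoots, IsRoot, eval_multiset_prod]
  refine Multiset.prod_eq_zero (Multiset.mem_map.mpr ⟨X - C (z ^ k), ?_, by simp⟩)
  exact Multiset.mem_map_of_mem _ ((mem_roots hh).mpr hz)

theorem cyclotomic_dvd_powRoots_comp_general (h : Polynomial ℂ) (s : Multiset ℕ)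
    (hh : h = (s.map fun a => cyclotomic a ℂ).prod)
    (n m k : ℕ)
    (hdvd : cyclotomic n ℂ ∣ h) :
    cyclotomic ((m + k) * (n / Nat.gcd n k)) ℂ ∣ (powRoots k h).comp (X ^ (m + k)) := by
  obtain hN | hN := Nat.eq_zero_or_pos ((m + k) * (n / Nat.gcd n k))
  · rw [hN, cyclotomic_zero]
    exact one_dvd _
  have hn : n ≠ 0 := by
    rintro rfl
    simp at hN
  have : NeZero n := ⟨hn⟩
  have hh0 : h ≠ 0 := by
    rw [hh]
    exact (monic_multiset_prod_of_monic _ _ fun a _ => cyclotomic.monic a ℂ).ne_zero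
  refine cyclotomic_dvd_of_forall_isPrimitiveRoot_isRoot
    (Complex.isPrimitiveRoot_exp _ hN.ne') fun τ hτ => ?_
  obtain ⟨ζ, hζ, hζk⟩ :=
    (Complex.isPrimitiveRoot_exp n hn).exists_isPrimitiveRoot_pow_eq k (hτ.pow hN rfl)
  have hζh : h.IsRoot ζ := (hζ.isRoot_cyclotomic (NeZero.pos n)).dvd hdvd
  simpa [IsRoot, hζk] using isRoot_powRoots_pow hh0 hζh k

/-- If `h` is a product of cyclotomic polynomials and `Φ_n ∣ h`, then
`Φ_{(m+k)·n/gcd(n,k)}` divides `h^{(k)}(τ^{m+k})`. -/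
theorem cyclotomic_dvd_powRoots_comp (h : Polynomial ℂ) (s : Multiset ℕ)
    (hs : ∀ a ∈ s, 0 < a) (hh : h = (s.map fun a => cyclotomic a ℂ).prod)
    (n m k : ℕ) (hn : 0 < n) (hm : 0 < m) (hk : 0 < k)
    (hdvd : cyclotomic n ℂ ∣ h) :
    cyclotomic ((m + k) * (n / Nat.gcd n k)) ℂ ∣ (powRoots k h).comp (X ^ (m + k)) :=
  cyclotomic_dvd_powRoots_comp_general h s hh n m k hdvd
end

section
/- Let h(τ) be a product of cyclotomic polynomials, and let n, m, k be positive integers with n dividing m. If Φ_n(τ) divides h(τ), then Φ_n(τ) divides h^{(k)}(τ^{m+k}). -/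
open Polynomial

/-- If `h` is a product of cyclotomic polynomials, `n ∣ m` and `Φ_n ∣ h`, then
`Φ_n` divides `h^{(k)}(τ^{m+k})`. -/
theorem cyclotomic_dvd_powRoots_comp_of_dvd (h : Polynomial ℂ) (s : Multiset ℕ)
    (hs : ∀ a ∈ s, 0 < a) (hh : h = (s.map fun a => cyclotomic a ℂ).prod)
    (n m k : ℕ) (hn : 0 < n) (hm : 0 < m) (hk : 0 < k) (hnm : n ∣ m)
    (hdvd : cyclotomic n ℂ ∣ h) :
    cyclotomic n ℂ ∣ (powRoots k h).comp (X ^ (m + k)) := by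
  have key : ∀ ζ : ℂ, IsPrimitiveRoot ζ n →
      IsRoot ((powRoots k h).comp (X ^ (m + k))) ζ := by
    intro ζ hζ
    have hh0 : h ≠ 0 := by
      rw [hh]
      refine (monic_multiset_prod_of_monic _ _ ?_).ne_zero
      intro a ha
      exact cyclotomic.monic _ _
    have hroot : IsRoot h ζ := by
      obtain ⟨q, hq⟩ := hdvd
      have := hζ.isRoot_cyclotomic hn
      simp [hq, IsRoot, this.eq_zero]
    have hmem : ζ ∈ h.roots := (mem_roots hh0).2 hroot
    have hfac : (X - C (ζ ^ k)) ∣ powRoots k h :=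
      Multiset.dvd_prod (Multiset.mem_map_of_mem _ hmem)
    obtain ⟨q, hq⟩ := hfac
    have hζm : ζ ^ m = 1 := by
      obtain ⟨c, rfl⟩ := hnm
      rw [pow_mul, hζ.pow_eq_one, one_pow]
    have hpow : ζ ^ (m + k) = ζ ^ k := by rw [pow_add, hζm, one_mul]
    simp [IsRoot, hq, eval_comp, hpow]
  have hprim : IsPrimitiveRoot (Complex.exp (2 * Real.pi * Complex.I / n)) n :=
    Complex.isPrimitiveRoot_exp n hn.ne'
  rw [cyclotomic_eq_prod_X_sub_primitiveRoots hprim]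
  refine Finset.prod_dvd_of_coprime ?_ ?_
  · intro a ha b hb hab
    exact isCoprime_X_sub_C_of_isUnit_sub (sub_ne_zero.2 hab).isUnit
  · intro μ' hμ'
    exact dvd_iff_isRoot.2 (key μ' ((mem_primitiveRoots hn).1 hμ'))
end

section
/- Let n, m, k be positive integers with n dividing m. If (τ^n − 1) divides a product of cyclotomic polynomials h(τ), then (τ^{n/gcd(n,k)} − 1)^{gcd(n,k)} divides h^{(k)}(τ), and consequently (τ^n − 1) divides h^{(k)}(τ^{m+k}). -/
/-!
If `ζ` is a primitive `n`-th root of unity and `g = gcd n k`, then `ζ ^ k` is a primitive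
`n / g`-th root of unity, so `k`-th powers map the `n`-th roots of unity onto the `n / g`-th
ones, each hit `g` times. Since `τ ^ n - 1 ∣ h` means the `n`-th roots of unity occur among the
roots of `h`, this gives `(τ ^ (n / g) - 1) ^ g ∣ h^{(k)}`. Substituting `τ ^ (m + k)` turns
`τ ^ (n / g) - 1` into `τ ^ ((m + k) n / g) - 1`, a multiple of `τ ^ n - 1` because `n ∣ m` and
`g ∣ k`.
-/

open Polynomial

theorem Multiset.map_pow_range_mul {M : Type*} [Monoid M] {η : M} {p : ℕ} (hη : η ^ p = 1) :
    ∀ g : ℕ, (range (g * p)).map (η ^ ·) = g • (range p).map (η ^ ·)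
  | 0 => by simp
  | g + 1 => by
    rw [add_mul, one_mul, range_add, map_add, map_map, succ_nsmul, map_pow_range_mul hη g]
    congr 1
    refine map_congr rfl fun j _ => ?_
    rw [Function.comp_apply, pow_add, mul_comm g p, pow_mul, hη, one_pow, one_mul]

namespace IsPrimitiveRoot

theorem pow_div_gcd {M : Type*} [CommMonoid M] {ζ : M} {n : ℕ} (hζ : IsPrimitiveRoot ζ n)
    (hn : 0 < n) (k : ℕ) : IsPrimitiveRoot (ζ ^ k) (n / n.gcd k) := by
  have hg : 0 < n.gcd k := Nat.gcd_pos_of_pos_left k hn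
  have hk : ζ ^ k = (ζ ^ n.gcd k) ^ (k / n.gcd k) := by
    rw [← pow_mul, Nat.mul_div_cancel' (Nat.gcd_dvd_right n k)]
  rw [hk]
  exact (hζ.pow_of_dvd hg.ne' (Nat.gcd_dvd_left n k)).pow_of_coprime _
    (Nat.coprime_div_gcd_div_gcd hg).symm

variable {R : Type*} [CommRing R] [IsDomain R] {ζ : R} {n : ℕ}

theorem map_pow_nthRoots_one (hζ : IsPrimitiveRoot ζ n) (hn : 0 < n) (k : ℕ) :
    (nthRoots n (1 : R)).map (· ^ k) = n.gcd k • nthRoots (n / n.gcd k) (1 : R) := by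
  have hη := hζ.pow_div_gcd hn k
  rw [hζ.nthRoots_eq (one_pow n), hη.nthRoots_eq (one_pow _), Multiset.map_map]
  simp only [mul_one, Function.comp_def, pow_right_comm ζ _ k]
  conv_lhs => rw [← Nat.mul_div_cancel' (Nat.gcd_dvd_left n k)]
  exact Multiset.map_pow_range_mul hη.pow_eq_one _

theorem prod_nthRoots_one_X_sub_C (hζ : IsPrimitiveRoot ζ n) (hn : 0 < n) :
    ((nthRoots n (1 : R)).map (X - C ·)).prod = X ^ n - 1 := by
  rw [← C_1]
  refine prod_multiset_X_sub_C_of_monic_of_roots_card_eq (monic_X_pow_sub_C _ hn.ne') ?_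
  rw [← nthRoots, hζ.card_nthRoots_one, natDegree_X_pow_sub_C]

end IsPrimitiveRoot

theorem X_pow_sub_one_dvd_comp_X_pow {R : Type*} [CommRing R] {f : R[X]} {n p g q : ℕ}
    (hf : (X ^ p - 1) ^ g ∣ f) (hg : g ≠ 0) (hnq : n ∣ q * p) : X ^ n - 1 ∣ f.comp (X ^ q) := by
  obtain ⟨c, rfl⟩ := hf
  obtain ⟨t, ht⟩ := hnq
  rw [mul_comp, pow_comp, sub_comp, pow_comp, X_comp, one_comp, ← pow_mul, ht]
  exact ((pow_one_sub_dvd_pow_mul_sub_one X n t).trans (dvd_pow_self _ hg)).mul_right _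

theorem X_pow_sub_one_pow_gcd_dvd_powRoots {h : ℂ[X]} (hh : h ≠ 0) {n : ℕ} (hn : 0 < n)
    (hdvd : X ^ n - 1 ∣ h) (k : ℕ) : (X ^ (n / n.gcd k) - 1) ^ n.gcd k ∣ powRoots k h := by
  have hζ := Complex.isPrimitiveRoot_exp n hn.ne'
  have hp : 0 < n / n.gcd k := Nat.div_pos (Nat.gcd_le_left k hn) (Nat.gcd_pos_of_pos_left k hn)
  have hle : nthRoots n (1 : ℂ) ≤ h.roots := by
    simpa [nthRoots] using roots.le_of_dvd hh hdvd
  rw [← (hζ.pow_div_gcd hn k).prod_nthRoots_one_X_sub_C hp, ← Multiset.prod_nsmul,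
    ← Multiset.map_nsmul, ← hζ.map_pow_nthRoots_one hn k, Multiset.map_map, powRoots]
  exact Multiset.prod_dvd_prod_of_le (Multiset.map_le_map hle)

theorem pow_sub_one_dvd_powRoots_general (h : Polynomial ℂ) (s : Multiset ℕ)
    (hh : h = (s.map fun a => cyclotomic a ℂ).prod)
    (n m k : ℕ) (hn : 0 < n) (hnm : n ∣ m)
    (hdvd : (X ^ n - 1 : Polynomial ℂ) ∣ h) :
    ((X ^ (n / Nat.gcd n k) - 1 : Polynomial ℂ) ^ (Nat.gcd n k) ∣ powRoots k h) ∧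
      (X ^ n - 1 : Polynomial ℂ) ∣ (powRoots k h).comp (X ^ (m + k)) := by
  have hh0 : h ≠ 0 := by
    rw [hh]
    exact (monic_multiset_prod_of_monic _ _ fun a _ => cyclotomic.monic a ℂ).ne_zero
  have hfirst := X_pow_sub_one_pow_gcd_dvd_powRoots hh0 hn hdvd k
  refine ⟨hfirst, X_pow_sub_one_dvd_comp_X_pow hfirst (Nat.gcd_pos_of_pos_left k hn).ne' ?_⟩
  have hk : n ∣ k * (n / n.gcd k) := by
    simpa [Nat.mul_div_cancel' (Nat.gcd_dvd_left n k)] using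
      Nat.mul_dvd_mul_right (Nat.gcd_dvd_right n k) (n / n.gcd k)
  rw [add_mul]
  exact Nat.dvd_add (hnm.mul_right _) hk

/-- If `n ∣ m` and `τ^n − 1` divides a product of cyclotomic polynomials `h`, then
`(τ^{n/gcd(n,k)} − 1)^{gcd(n,k)}` divides `h^{(k)}(τ)`, and consequently `τ^n − 1`
divides `h^{(k)}(τ^{m+k})`. -/
theorem pow_sub_one_dvd_powRoots (h : Polynomial ℂ) (s : Multiset ℕ)
    (hs : ∀ a ∈ s, 0 < a) (hh : h = (s.map fun a => cyclotomic a ℂ).prod)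
    (n m k : ℕ) (hn : 0 < n) (hm : 0 < m) (hk : 0 < k) (hnm : n ∣ m)
    (hdvd : (X ^ n - 1 : Polynomial ℂ) ∣ h) :
    ((X ^ (n / Nat.gcd n k) - 1 : Polynomial ℂ) ^ (Nat.gcd n k) ∣ powRoots k h) ∧
      (X ^ n - 1 : Polynomial ℂ) ∣ (powRoots k h).comp (X ^ (m + k)) :=
  pow_sub_one_dvd_powRoots_general h s hh n m k hn hnm hdvd
end

section
/- For positive integers N₁, ..., N_q and k, let k_j = gcd(k, N_j), n_q = gcd(N₁,...,N_q), and e_q = gcd(k, n_q). The q-dimensional simplicial cone ρ in ℝ^{q+1} spanned by the primitive integral vectors v_j = (k e_j + N_j e_z)/k_j (j = 1,...,q, where e_j, e_z is the standard basis) has multiplicity (index) equal to k^{q−1} e_q ∏_{j=1}^q k_j^{−1}; equivalently, the gcd of the q×q minors of the matrix whose rows are the v_j equals k^{q−1} e_q / ∏_{j=1}^q k_j. -/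
open Finset

/-- The multiplicity (index) of the `q`-dimensional simplicial cone `ρ ⊂ ℝ^{q+1}`
spanned by the primitive integral vectors `v_j = (k·e_j + N_j·e_z)/k_j`, computed as
the gcd of the `q×q` minors of the matrix whose rows are the `v_j`, equals
`k^{q−1}·e_q / ∏_j k_j`; equivalently, `(∏_j k_j) · gcd(minors) = k^{q−1}·e_q`,
where `k_j = gcd(k, N_j)`, `n_q = gcd(N₁,…,N_q)` and `e_q = gcd(k, n_q)`. -/
theorem multiplicity_of_cone_rho (q k : ℕ) (hq : 0 < q) (hk : 0 < k)
    (N : Fin q → ℕ) (hN : ∀ j, 0 < N j) :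
    (∏ j, Nat.gcd k (N j)) *
      (Finset.univ.gcd fun c : Fin (q + 1) =>
        (((Matrix.of fun (j : Fin q) (i : Fin (q + 1)) =>
            if i = Fin.castSucc j then ((k / Nat.gcd k (N j) : ℕ) : ℤ)
            else if i = Fin.last q then ((N j / Nat.gcd k (N j) : ℕ) : ℤ)
            else 0).submatrix id c.succAbove).det).natAbs) =
      k ^ (q - 1) * Nat.gcd k (Finset.univ.gcd N) := by
  obtain ⟨m, rfl⟩ : ∃ m, q = m + 1 := ⟨q - 1, by omega⟩
  set A : Matrix (Fin (m+1)) (Fin (m+2)) ℤ :=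
    Matrix.of fun (j : Fin (m+1)) (i : Fin (m+2)) =>
      if i = Fin.castSucc j then ((k / Nat.gcd k (N j) : ℕ) : ℤ)
      else if i = Fin.last (m+1) then ((N j / Nat.gcd k (N j) : ℕ) : ℤ)
      else 0 with hA
  -- last minor
  have hlast : (A.submatrix id (Fin.last (m+1)).succAbove).det.natAbs
      = ∏ j : Fin (m+1), (k / Nat.gcd k (N j)) := by
    have : A.submatrix id (Fin.last (m+1)).succAbove
        = Matrix.diagonal (fun j : Fin (m+1) => ((k / Nat.gcd k (N j) : ℕ) : ℤ)) := by
      ext j l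
      simp only [hA, Matrix.submatrix_apply, id_eq, Fin.succAbove_last, Matrix.of_apply,
        Matrix.diagonal_apply]
      rcases eq_or_ne j l with rfl | h
      · simp
      · rw [if_neg (by simpa [Fin.castSucc_inj] using fun h' => h h'.symm),
          if_neg (Fin.castSucc_lt_last l).ne, if_neg h]
    rw [this, Matrix.det_diagonal, ← Nat.cast_prod, Int.natAbs_natCast]
  -- other minors
  have hmin : ∀ i : Fin (m+1),
      (A.submatrix id (Fin.castSucc i).succAbove).det.natAbs
        = (N i / Nat.gcd k (N i)) *
            ∏ j : Fin m, (k / Nat.gcd k (N (i.succAbove j))) := by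
    intro i
    set M := A.submatrix id (Fin.castSucc i).succAbove with hM
    have hdet : M.det = (-1)^((i : ℕ) + m) * ((N i / Nat.gcd k (N i) : ℕ) : ℤ) *
        ∏ j : Fin m, ((k / Nat.gcd k (N (i.succAbove j)) : ℕ) : ℤ) := by
      rw [Matrix.det_succ_row M i]
      rw [Finset.sum_eq_single (Fin.last m)]
      · have hcol : (Fin.castSucc i).succAbove (Fin.last m) = Fin.last (m+1) :=
          Fin.succAbove_ne_last_last (Fin.castSucc_lt_last i).ne
        have hMi : M i (Fin.last m) = ((N i / Nat.gcd k (N i) : ℕ) : ℤ) := by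
          simp only [hM, hA, Matrix.submatrix_apply, id_eq, Matrix.of_apply, hcol]
          simp [(Fin.castSucc_lt_last i).ne']
        have hinner : M.submatrix i.succAbove (Fin.last m).succAbove
            = Matrix.diagonal (fun j : Fin m =>
                ((k / Nat.gcd k (N (i.succAbove j)) : ℕ) : ℤ)) := by
          ext j l
          simp only [hM, hA, Matrix.submatrix_apply, Fin.succAbove_last, id_eq,
            Matrix.of_apply, Fin.castSucc_succAbove_castSucc, Matrix.diagonal_apply]
          rcases eq_or_ne j l with rfl | h
          · simp
          · rw [if_neg, if_neg (Fin.castSucc_lt_last _).ne, if_neg h]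
            simp only [Fin.castSucc_inj]
            exact fun h' => h ((Fin.succAbove_right_injective h').symm)
        rw [hMi, hinner, Matrix.det_diagonal, Fin.val_last]
      · intro b _ hb
        have hz : M i b = 0 := by
          simp only [hM, hA, Matrix.submatrix_apply, id_eq, Matrix.of_apply]
          rw [if_neg (Fin.succAbove_ne _ _), if_neg]
          exact Fin.succAbove_ne_last (Fin.castSucc_lt_last i).ne
            (by simpa using hb)
        simp [hz]
      · simp
    rw [hdet, Int.natAbs_mul, Int.natAbs_mul, Int.natAbs_pow,
      ← Nat.cast_prod, Int.natAbs_natCast, Int.natAbs_natCast]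
    simp
  -- split the gcd over Fin (m+2)
  rw [Fin.univ_castSuccEmb (m+1), Finset.cons_eq_insert, Finset.gcd_insert,
    Finset.map_eq_image, Finset.gcd_image]
  have hcomp : ((fun c : Fin (m+2) => ((A.submatrix id c.succAbove).det).natAbs)
        ∘ ⇑Fin.castSuccEmb)
      = fun i : Fin (m+1) =>
          (N i / Nat.gcd k (N i)) * ∏ j : Fin m, (k / Nat.gcd k (N (i.succAbove j))) :=
    funext fun i => hmin i
  rw [hcomp, hlast]
  -- now pure nat arithmetic
  have hPk : ∀ j : Fin (m+1), Nat.gcd k (N j) * (k / Nat.gcd k (N j)) = k :=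
    fun j => Nat.mul_div_cancel' (Nat.gcd_dvd_left _ _)
  have hPN : ∀ j : Fin (m+1), Nat.gcd k (N j) * (N j / Nat.gcd k (N j)) = N j :=
    fun j => Nat.mul_div_cancel' (Nat.gcd_dvd_right _ _)
  have h1 : (∏ j : Fin (m+1), Nat.gcd k (N j)) * ∏ j : Fin (m+1), (k / Nat.gcd k (N j))
      = k ^ (m+1) := by
    rw [← Finset.prod_mul_distrib]
    simp [hPk]
  have h2 : (∏ j : Fin (m+1), Nat.gcd k (N j)) *
      (Finset.univ.gcd fun i : Fin (m+1) =>
        (N i / Nat.gcd k (N i)) * ∏ j : Fin m, (k / Nat.gcd k (N (i.succAbove j))))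
      = Finset.univ.gcd N * k ^ m := by
    rw [← normalize_eq (∏ j : Fin (m+1), Nat.gcd k (N j)), ← Finset.gcd_mul_left]
    rw [show (Finset.univ.gcd fun i : Fin (m+1) =>
        (∏ j : Fin (m+1), Nat.gcd k (N j)) *
          ((N i / Nat.gcd k (N i)) * ∏ j : Fin m, (k / Nat.gcd k (N (i.succAbove j)))))
        = Finset.univ.gcd fun i : Fin (m+1) => N i * k ^ m from
      Finset.gcd_congr rfl fun i _ => by
        rw [Fin.prod_univ_succAbove (fun j => Nat.gcd k (N j)) i, mul_mul_mul_comm,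
          hPN i, ← Finset.prod_mul_distrib]
        simp [hPk]]
    rw [Finset.gcd_mul_right, normalize_eq]
  rw [gcd_eq_nat_gcd, ← Nat.gcd_mul_left, h1, h2]
  simp only [Nat.add_sub_cancel]
  rw [pow_succ, mul_comm (Finset.univ.gcd N) (k ^ m), Nat.gcd_mul_left]
end

section
/- Let m, k, q, N₁,...,N_q be positive integers, let N = (N₁,...,N_q, m) ∈ ℤ^{q+1}, and let ρ = { b ∈ ℝ^{q+1}_{≥0} : ⟨b, N⟩ = (m+k) b_z } where b_z is the last coordinate. Let n_q = gcd(N₁,...,N_q) and e_q = gcd(k, n_q). Then the gcd of the set { ⟨a, N⟩ : a ∈ ρ ∩ ℤ^{q+1}_{>0} } equals (m+k)·n_q / e_q. -/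
open Finset

lemma my_bezout {ι : Type*} [DecidableEq ι] (s : Finset ι) (f : ι → ℕ) :
    ∃ x : ι → ℤ, ∑ i ∈ s, x i * f i = s.gcd f := by
  induction s using Finset.induction with
  | empty => exact ⟨0, by simp⟩
  | @insert a s ha ih =>
    obtain ⟨x, hx⟩ := ih
    refine ⟨fun i => if i = a then Nat.gcdA (f a) (s.gcd f)
      else Nat.gcdB (f a) (s.gcd f) * x i, ?_⟩
    rw [Finset.sum_insert ha, Finset.gcd_insert]
    have h1 : ∑ i ∈ s, (if i = a then Nat.gcdA (f a) (s.gcd f)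
        else Nat.gcdB (f a) (s.gcd f) * x i) * (f i : ℤ)
        = Nat.gcdB (f a) (s.gcd f) * ∑ i ∈ s, x i * f i := by
      rw [Finset.mul_sum]
      refine Finset.sum_congr rfl fun i hi => ?_
      have : i ≠ a := fun h => ha (h ▸ hi)
      simp [this, mul_assoc]
    rw [h1, hx]; simp only [if_pos rfl, if_true]
    have : (GCDMonoid.gcd (f a) (s.gcd f) : ℕ) = Nat.gcd (f a) (s.gcd f) := rfl
    rw [this, Nat.gcd_eq_gcd_ab]
    ring

lemma my_rep (q : ℕ) (hq : 0 < q) (N : Fin q → ℕ) (hN : ∀ j, 0 < N j) :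
    ∃ C : ℕ, ∀ t : ℕ, C ≤ t → ∃ a : Fin q → ℕ, (∀ j, 0 < a j) ∧
      ∑ j, a j * N j = (Finset.univ.gcd N) * t := by
  set n : ℕ := Finset.univ.gcd N with hn_def
  have hn : 0 < n := by
    rcases Nat.eq_zero_or_pos n with h | h
    · exfalso
      have := (Finset.gcd_eq_zero_iff.mp h) ⟨0, hq⟩ (Finset.mem_univ _)
      exact absurd this (hN ⟨0, hq⟩).ne'
    · exact h
  obtain ⟨x, hx⟩ := my_bezout Finset.univ N
  set S : ℕ := ∑ j, N j with hS_def
  have hnS : n ∣ S := Finset.dvd_sum fun j _ => Finset.gcd_dvd (Finset.mem_univ j)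
  obtain ⟨σ, hσ⟩ := hnS
  have hS_pos : 0 < S := Finset.sum_pos (fun j _ => hN j) ⟨⟨0, hq⟩, Finset.mem_univ _⟩
  have hσ_pos : 0 < σ := Nat.pos_of_ne_zero fun h => by simp [h] at hσ; omega
  set X : ℕ := ∑ j, (x j).natAbs with hX_def
  refine ⟨σ * (σ * X + 2), fun t ht => ?_⟩
  set B : ℤ := (t : ℤ) / σ with hB_def
  set u : ℤ := (t : ℤ) % σ with hu_def
  have hσZ : (0:ℤ) < σ := by exact_mod_cast hσ_pos
  have hBu : (σ:ℤ) * B + u = t := Int.mul_ediv_add_emod t σ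
  have hu0 : 0 ≤ u := Int.emod_nonneg _ hσZ.ne'
  have hu1 : u < σ := Int.emod_lt_of_pos _ hσZ
  have htZ : (σ:ℤ) * (σ * X + 2) ≤ t := by exact_mod_cast ht
  have hB_big : (σ:ℤ) * X + 2 ≤ B := by nlinarith
  have hxj : ∀ j, (x j) ≤ (X:ℤ) ∧ -(X:ℤ) ≤ x j := by
    intro j
    have h1 : (x j).natAbs ≤ X := Finset.single_le_sum
      (f := fun j => (x j).natAbs) (fun i _ => Nat.zero_le _) (Finset.mem_univ j)
    have h2 : |x j| ≤ (X:ℤ) := by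
      rw [Int.abs_eq_natAbs]; exact_mod_cast h1
    constructor
    · exact (abs_le.mp h2).2
    · exact (abs_le.mp h2).1
  have hσX : (0:ℤ) ≤ σ * X := by positivity
  have hpos : ∀ j, 1 ≤ B + u * x j := by
    intro j
    obtain ⟨h1, h2⟩ := hxj j
    nlinarith [mul_le_mul_of_nonneg_left h2 hu0, hu1, hB_big]
  refine ⟨fun j => (B + u * x j).toNat, fun j => ?_, ?_⟩
  · have h1 : (1:ℤ) ≤ B + u * x j := hpos j
    have h2 : (1:ℤ) ≤ ((B + u * x j).toNat : ℤ) := by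
      rwa [Int.toNat_of_nonneg (by linarith)]
    exact_mod_cast h2
  · have hcast : ∀ j, ((B + u * x j).toNat : ℤ) = B + u * x j := by
      intro j
      exact Int.toNat_of_nonneg (by linarith [hpos j])
    have key : ∑ j, (B + u * x j) * (N j : ℤ) = (n : ℤ) * t := by
      have e1 : ∑ j, (B + u * x j) * (N j:ℤ)
          = B * (∑ j, (N j:ℤ)) + u * (∑ j, x j * N j) := by
        rw [Finset.mul_sum, Finset.mul_sum, ← Finset.sum_add_distrib]
        exact Finset.sum_congr rfl fun j _ => by ring
      have e2 : (∑ j, (N j:ℤ)) = (n:ℤ) * σ := by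
        have : ((S:ℕ):ℤ) = (n:ℤ) * σ := by exact_mod_cast hσ
        rw [← this, hS_def]; push_cast; ring
      rw [e1, hx, e2, ← hn_def]
      linear_combination (n:ℤ) * hBu
    have : ((∑ j, (B + u * x j).toNat * N j : ℕ) : ℤ) = ((n * t : ℕ) : ℤ) := by
      push_cast
      rw [Finset.sum_congr rfl fun j _ => by rw [hcast j]]
      exact key
    exact_mod_cast this

/-- For the cone `ρ = { b ∈ ℝ^{q+1}_{≥0} : ⟨b,N⟩ = (m+k)·b_z }` with
`N = (N₁,…,N_q,m)`, the gcd of `{ ⟨a,N⟩ : a ∈ ρ ∩ ℤ^{q+1}_{>0} }` equals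
`(m+k)·n_q/e_q` where `n_q = gcd(N₁,…,N_q)` and `e_q = gcd(k, n_q)`.

A vector `a ∈ ρ ∩ ℤ^{q+1}_{>0}` is encoded by its first `q` coordinates `a : Fin q → ℕ`
and its last coordinate `az`, the membership condition being
`∑_j a_j N_j + az·m = (m+k)·az` (so that `⟨a,N⟩ = (m+k)·az`), and the gcd statement is
expressed by the usual two divisibility conditions. -/
theorem gcd_pairing_on_rho (q m k : ℕ) (hq : 0 < q) (hm : 0 < m) (hk : 0 < k)
    (N : Fin q → ℕ) (hN : ∀ j, 0 < N j) :
    (∀ (a : Fin q → ℕ) (az : ℕ), (∀ j, 0 < a j) → 0 < az →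
        (∑ j, a j * N j) + az * m = (m + k) * az →
        (m + k) * (Finset.univ.gcd N / Nat.gcd k (Finset.univ.gcd N)) ∣ (m + k) * az) ∧
      ∀ c : ℕ,
        (∀ (a : Fin q → ℕ) (az : ℕ), (∀ j, 0 < a j) → 0 < az →
          (∑ j, a j * N j) + az * m = (m + k) * az → c ∣ (m + k) * az) →
        c ∣ (m + k) * (Finset.univ.gcd N / Nat.gcd k (Finset.univ.gcd N)) := by
  set n : ℕ := Finset.univ.gcd N with hn_def
  have hn : 0 < n := by
    rcases Nat.eq_zero_or_pos n with h | h
    · exfalso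
      have := (Finset.gcd_eq_zero_iff.mp h) ⟨0, hq⟩ (Finset.mem_univ _)
      exact absurd this (hN ⟨0, hq⟩).ne'
    · exact h
  set e : ℕ := Nat.gcd k n with he_def
  have he : 0 < e := Nat.gcd_pos_of_pos_left _ hk
  set n' : ℕ := n / e with hn'_def
  set k' : ℕ := k / e with hk'_def
  have hek : e * k' = k := Nat.mul_div_cancel' (Nat.gcd_dvd_left k n)
  have hen : e * n' = n := Nat.mul_div_cancel' (Nat.gcd_dvd_right k n)
  have hn' : 0 < n' := Nat.div_pos (Nat.le_of_dvd hn (Nat.gcd_dvd_right k n)) he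
  have hk' : 0 < k' := Nat.div_pos (Nat.le_of_dvd hk (Nat.gcd_dvd_left k n)) he
  have hcop : Nat.Coprime k' n' := Nat.coprime_div_gcd_div_gcd he
  constructor
  · intro a az hapos hazpos heq
    -- extract ∑ a_j N_j = k * az
    have hsum : (∑ j, a j * N j) = k * az := by
      have h1 : (m + k) * az = az * m + k * az := by ring
      omega
    have hdvd1 : n ∣ k * az := by
      rw [← hsum]
      exact Finset.dvd_sum fun j _ =>
        Dvd.dvd.mul_left (Finset.gcd_dvd (Finset.mem_univ j)) (a j)
    have hdvd2 : n' ∣ k' * az := by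
      have : e * n' ∣ e * (k' * az) := by
        rw [hen, ← mul_assoc, hek]; exact hdvd1
      exact (mul_dvd_mul_iff_left he.ne').mp this
    have hdvd3 : n' ∣ az := (Nat.Coprime.dvd_of_dvd_mul_left hcop.symm hdvd2)
    exact mul_dvd_mul_left (m + k) hdvd3
  · intro c hc
    obtain ⟨C, hC⟩ := my_rep q hq N hN
    set T : ℕ := C + 1 with hT_def
    have hT : 0 < T := Nat.succ_pos C
    have key : ∀ T' : ℕ, 0 < T' → C ≤ T' → c ∣ (m + k) * (n' * T') := by
      intro T' hT' hCT'
      have ht : C ≤ k' * T' := le_trans hCT' (Nat.le_mul_of_pos_left T' hk')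
      obtain ⟨a, hapos, hasum⟩ := hC (k' * T') ht
      have hkn : k * (n' * T') = n * (k' * T') := by
        rw [← hek, ← hen]; ring
      have heq : (∑ j, a j * N j) + (n' * T') * m = (m + k) * (n' * T') := by
        rw [hasum, ← hkn]; ring
      exact hc a (n' * T') hapos (by positivity) heq
    have h1 : c ∣ (m + k) * (n' * T) := key T hT (Nat.le_succ C)
    have h2 : c ∣ (m + k) * (n' * (T + 1)) := key (T + 1) (Nat.succ_pos T) (by omega)
    have expand : (m + k) * (n' * (T + 1)) = (m + k) * (n' * T) + (m + k) * n' := by ring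
    rw [expand] at h2
    exact (Nat.dvd_add_right h1).mp h2
end
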